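/- Let n ≥ 4 be an integer, let K be an abstract triangulation whose boundary ∂K is the cycle graph C_n, fix vertices x, y of C_n that are not adjacent in C_n, and let L and R denote the two connected components of C_n − x − y. If S ⊆ V(K)\{x,y} separates L from R in K − x − y, then there exists a path from x to y in the 1-skeleton of K all of whose internal vertices belong to S. -/

import Mathlib

/-!
Colour black the vertex `x`, the vertices of `L`, and every vertex reachable from `L` in
`K − S − x − y`. By the separation hypothesis neither `y` nor any vertex of `R` is black, so on
the boundary cycle the black–white edges are `x r` (for the unique neighbour `r` of `x` in `R`)
and edges ending in `y`. An edge of `K` with one black and one white endpoint (a door) has an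
endpoint in `S ∪ {x, y}`, since otherwise its white endpoint would be reachable from `L` as well.
In the graph of doors, two doors being adjacent when they lie in a common triangle, every
triangle through a door contains exactly one other door, so the degree of a door is the number
of triangles containing it, and the odd-degree doors are the boundary ones. By the handshake
lemma the component of the door `x r` contains a second boundary door, which therefore ends in
`y`; consecutive doors share a triangle, so their endpoints in `S ∪ {x, y}` form a walk from `x`
to `y` inside `S ∪ {x, y}`.
-/

open SimpleGraph Finset

/-- An abstract triangulation: a finite nonempty set of triangles (3-element
vertex sets) such that every edge (2-element subset of a triangle) lies in
exactly 1 or 2 triangles. -/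
structure AbstractTriangulation (V : Type) [DecidableEq V] [Fintype V] where
  tris : Finset (Finset V)
  tris_nonempty : tris.Nonempty
  card_three : ∀ t ∈ tris, t.card = 3
  edge_mem : ∀ e : Finset V, e.card = 2 → (∃ t ∈ tris, e ⊆ t) →
    (tris.filter fun t => e ⊆ t).card = 1 ∨ (tris.filter fun t => e ⊆ t).card = 2

namespace AbstractTriangulation

variable {V : Type} [DecidableEq V] [Fintype V]

/-- The vertex set `V(K)`: vertices lying in some triangle. -/
def verts (K : AbstractTriangulation V) : Finset V := K.tris.biUnion id

/-- The edge set `E(K)`: 2-element subsets of triangles. -/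
def edges (K : AbstractTriangulation V) : Finset (Finset V) :=
  K.tris.biUnion fun t => t.powersetCard 2

/-- The 1-skeleton of `K`: `u,v` adjacent iff `{u,v}` is an edge of `K`. -/
def skeleton (K : AbstractTriangulation V) : SimpleGraph V where
  Adj u v := u ≠ v ∧ ∃ t ∈ K.tris, u ∈ t ∧ v ∈ t
  symm := ⟨by rintro u v ⟨h, t, ht, hu, hv⟩; exact ⟨h.symm, t, ht, hv, hu⟩⟩
  loopless := ⟨by rintro u ⟨h, -⟩; exact h rfl⟩

/-- The boundary `∂K`: the graph on the vertices of `K` whose edges are the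
edges of `K` contained in exactly one triangle. -/
def boundary (K : AbstractTriangulation V) : SimpleGraph V where
  Adj u v := u ≠ v ∧ (K.tris.filter fun t => u ∈ t ∧ v ∈ t).card = 1
  symm := ⟨by
    rintro u v ⟨h, hc⟩
    exact ⟨h.symm, by simpa [and_comm] using hc⟩⟩
  loopless := ⟨by rintro u ⟨h, -⟩; exact h rfl⟩

/-- `∂K` is (isomorphic to) the cycle `C_n`, with the identification given by
`f : Fin n → V`: `f` is injective, boundary adjacency corresponds exactly to
cycle adjacency, and every boundary edge joins two vertices in the image of `f`. -/
def BoundaryIsCycle (K : AbstractTriangulation V) (n : ℕ) (f : Fin n → V) : Prop :=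
  Function.Injective f ∧
  (∀ i j : Fin n, K.boundary.Adj (f i) (f j) ↔ (cycleGraph n).Adj i j) ∧
  (∀ u v : V, K.boundary.Adj u v → (∃ i, u = f i) ∧ (∃ j, v = f j))

/-- `K` is a `δ`-Lipschitz filling of `C_n` (with boundary identification `f`):
`∂K = C_n` and `d_K(x,y) ≥ δ · d_{C_n}(x,y)` for all boundary vertices, expressed
by the fact that every walk in the 1-skeleton between boundary vertices has
length at least `δ · d_{C_n}(x,y)`. -/
def IsLipschitzFilling (K : AbstractTriangulation V) (n : ℕ) (δ : ℝ)
    (f : Fin n → V) : Prop :=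
  K.BoundaryIsCycle n f ∧
  ∀ (i j : Fin n) (p : K.skeleton.Walk (f i) (f j)),
    δ * ((cycleGraph n).dist i j : ℝ) ≤ (p.length : ℝ)

end AbstractTriangulation

/-- The cycle graph `C_n` with the vertices `x` and `y` deleted (as a graph on
`Fin n` in which `x` and `y` have become isolated). -/
def deletedCycle (n : ℕ) (x y : Fin n) : SimpleGraph (Fin n) where
  Adj u v := (SimpleGraph.cycleGraph n).Adj u v ∧ u ≠ x ∧ u ≠ y ∧ v ≠ x ∧ v ≠ y
  symm := ⟨by rintro u v ⟨h, h1, h2, h3, h4⟩; exact ⟨h.symm, h3, h4, h1, h2⟩⟩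
  loopless := ⟨by rintro u ⟨h, -⟩; exact h.ne rfl⟩

namespace SimpleGraph

variable {V : Type*} {G : SimpleGraph V}

theorem reachable_of_adj_succ (w : ℕ → V) {a b : ℕ} (hab : a ≤ b)
    (h : ∀ j, a ≤ j → j < b → G.Adj (w j) (w (j + 1))) : G.Reachable (w a) (w b) := by
  induction b, hab using Nat.le_induction with
  | base => rfl
  | succ b hab ih =>
    exact (ih fun j hj hjb => h j hj (by omega)).trans (h b hab (by omega)).reachable

theorem exists_ne_odd_degree_reachable [Fintype V] [DecidableRel G.Adj] {a : V}
    (ha : Odd (G.degree a)) : ∃ b, b ≠ a ∧ G.Reachable a b ∧ Odd (G.degree b) := by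
  classical
  let s : Set V := {v | G.Reachable a v}
  have hdeg (v : s) : (G.induce s).degree v = G.degree v :=
    degree_induce_of_neighborSet_subset fun w hw =>
      v.2.trans ((G.mem_neighborSet _ _).1 hw).reachable
  obtain ⟨⟨b, hb⟩, hba, hodd⟩ :=
    (G.induce s).exists_ne_odd_degree_of_exists_odd_degree ⟨a, .refl a⟩ (by rwa [hdeg])
  exact ⟨b, fun h => hba (Subtype.ext h), hb, by rwa [hdeg] at hodd⟩

lemma exists_isPath_of_induce_reachable {s : Set V} {u v : V} {hu : u ∈ s} {hv : v ∈ s}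
    (h : (G.induce s).Reachable ⟨u, hu⟩ ⟨v, hv⟩) :
    ∃ p : G.Walk u v, p.IsPath ∧ ∀ z ∈ p.support, z ∈ s := by
  classical
  obtain ⟨q⟩ := h
  let p : G.Walk u v := q.map (Embedding.induce s).toHom
  refine ⟨p.toPath, p.toPath.2, fun z hz => ?_⟩
  have hz : z ∈ p.support := p.support_toPath_subset_support hz
  rw [show p.support = _ from Walk.support_map _ q] at hz
  obtain ⟨z', -, rfl⟩ := List.mem_map.1 hz
  exact z'.2

def closureAvoiding (G : SimpleGraph V) (B X : Set V) : Set V :=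
  X ∪ {v | ∃ w ∈ X, ∃ (hw : w ∉ B) (hv : v ∉ B), (G.induce Bᶜ).Reachable ⟨w, hw⟩ ⟨v, hv⟩}

lemma mem_or_mem_of_adj_of_mem_closureAvoiding {B X : Set V} {u v : V}
    (hu : u ∈ G.closureAvoiding B X) (hv : v ∉ G.closureAvoiding B X) (huv : G.Adj u v) :
    u ∈ B ∨ v ∈ B := by
  by_contra! h
  obtain ⟨huB, hvB⟩ := h
  have hstep : (G.induce Bᶜ).Reachable ⟨u, huB⟩ ⟨v, hvB⟩ := (induce_adj.2 huv).reachable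
  rcases hu with hu | ⟨w, hw, hwB, _, hwu⟩
  · exact hv (.inr ⟨u, hu, huB, hvB, hstep⟩)
  · exact hv (.inr ⟨w, hw, hwB, hvB, hwu.trans hstep⟩)

end SimpleGraph

section CycleArcs

open Fin.NatCast

variable {n : ℕ} (x y : Fin (n + 2))

lemma add_natCast_inj {j k : ℕ} (hj : j < n + 2) (hk : k < n + 2) :
    x + (j : Fin (n + 2)) = x + k ↔ j = k := by
  rw [add_right_inj, Fin.ext_iff, Fin.val_cast_of_lt hj, Fin.val_cast_of_lt hk]

lemma add_natCast_ne_and_ne {i : ℕ} (hi : 0 < i) (hin : i < n + 2) (hiy : i ≠ (y - x).val) :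
    x + (i : Fin (n + 2)) ≠ x ∧ x + (i : Fin (n + 2)) ≠ y := by
  constructor
  · nth_rw 2 [← add_zero x]
    rw [← Nat.cast_zero, Ne, add_natCast_inj x hin (by omega)]
    omega
  · conv_rhs => rw [← add_sub_cancel x y, ← Fin.cast_val_eq_self (y - x)]
    rw [Ne, add_natCast_inj x hin (y - x).isLt]
    exact hiy

lemma deletedCycle_adj_add_natCast_succ {j : ℕ} (hj : 0 < j) (hjn : j + 1 < n + 2)
    (hjy : j ≠ (y - x).val) (hjy' : j + 1 ≠ (y - x).val) :
    (deletedCycle (n + 2) x y).Adj (x + j) (x + (j + 1 : ℕ)) := by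
  obtain ⟨hjx, hjy⟩ := add_natCast_ne_and_ne x y hj (by omega) hjy
  obtain ⟨hjx', hjy'⟩ := add_natCast_ne_and_ne x y j.succ_pos hjn hjy'
  refine ⟨?_, hjx, hjy, hjx', hjy'⟩
  rw [cycleGraph_adj, Nat.cast_succ, ← add_assoc, add_sub_cancel_left]
  exact .inr rfl

lemma deletedCycle_reachable_add_one_or_sub_one {u : Fin (n + 2)} (hux : u ≠ x) (huy : u ≠ y) :
    (deletedCycle (n + 2) x y).Reachable (x + 1) u ∨
      (deletedCycle (n + 2) x y).Reachable u (x - 1) := by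
  set k := (u - x).val
  set D := (y - x).val
  have hu : x + (k : Fin (n + 2)) = u := by simp [k]
  have hk : 0 < k := by
    rw [Nat.pos_iff_ne_zero, Ne, Fin.val_eq_zero_iff, sub_eq_zero]; exact hux
  have hkD : k ≠ D := fun h => huy (by rw [← sub_left_inj (a := x)]; exact Fin.ext h)
  have hkn : k < n + 2 := (u - x).isLt
  have hDn : D < n + 2 := (y - x).isLt
  rcases lt_or_gt_of_ne hkD with hlt | hgt
  · left
    have := reachable_of_adj_succ (G := deletedCycle (n + 2) x y) (fun j => x + (j : Fin (n + 2)))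
      (a := 1) (b := k) hk fun j hj hjk =>
        deletedCycle_adj_add_natCast_succ x y (by omega) (by omega) (by omega) (by omega)
    simpa [hu] using this
  · right
    have := reachable_of_adj_succ (G := deletedCycle (n + 2) x y) (fun j => x + (j : Fin (n + 2)))
      (a := k) (b := n + 1) (by omega) fun j hj hjk =>
        deletedCycle_adj_add_natCast_succ x y (by omega) (by omega) (by omega) (by omega)
    have hlast : ((n + 1 : ℕ) : Fin (n + 2)) = -1 := by
      rw [eq_neg_iff_add_eq_zero, ← Nat.cast_succ]; exact Fin.natCast_self (n + 2)
    simpa [hu, hlast, ← sub_eq_add_neg] using this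

lemma not_add_one_mem_and_sub_one_mem {P Q : Set (Fin (n + 2))} (hxQ : x ∉ Q) (hyQ : y ∉ Q)
    (hQ : Q.Nonempty)
    (hPQ : ∀ u ∈ P, ∀ v ∈ Q, ¬ (deletedCycle (n + 2) x y).Reachable u v) :
    ¬ (x + 1 ∈ P ∧ x - 1 ∈ P) := by
  rintro ⟨hplus, hminus⟩
  obtain ⟨q, hq⟩ := hQ
  rcases deletedCycle_reachable_add_one_or_sub_one x y (u := q) (by rintro rfl; exact hxQ hq)
      (by rintro rfl; exact hyQ hq) with h | h
  · exact hPQ _ hplus q hq h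
  · exact hPQ _ hminus q hq h.symm

lemma existsUnique_adj_mem_of_separated (hnadj : ¬ (cycleGraph (n + 2)).Adj x y)
    {L R : Set (Fin (n + 2))} (hLne : L.Nonempty) (hRne : R.Nonempty) (hdisj : Disjoint L R)
    (hxL : x ∉ L) (hyL : y ∉ L) (hxR : x ∉ R) (hyR : y ∉ R)
    (hcover : ∀ u, u ≠ x → u ≠ y → u ∈ L ∨ u ∈ R)
    (hLR : ∀ u ∈ L, ∀ v ∈ R, ¬ (deletedCycle (n + 2) x y).Reachable u v) :
    ∃! r, r ∈ R ∧ (cycleGraph (n + 2)).Adj x r := by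
  have hnbr : ∀ r, (cycleGraph (n + 2)).Adj x r ↔ r = x - 1 ∨ r = x + 1 := fun r => by
    rw [← mem_neighborSet, cycleGraph_neighborSet]; rfl
  have hside : ∀ r, (cycleGraph (n + 2)).Adj x r → r ∈ L ∨ r ∈ R := fun r hr =>
    hcover r hr.ne.symm (by rintro rfl; exact hnadj hr)
  have hRL : ∀ u ∈ R, ∀ v ∈ L, ¬ (deletedCycle (n + 2) x y).Reachable u v :=
    fun u hu v hv h => hLR v hv u hu h.symm
  have hnotR := not_add_one_mem_and_sub_one_mem x y hxL hyL hLne hRL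
  have hnotL := not_add_one_mem_and_sub_one_mem x y hxR hyR hRne hLR
  have hmem : ∀ r, r ∈ R ∧ (cycleGraph (n + 2)).Adj x r ↔ r ∈ R ∧ (r = x - 1 ∨ r = x + 1) :=
    fun r => and_congr_right' (hnbr r)
  simp only [hmem]
  rcases hside (x - 1) ((hnbr _).2 (.inl rfl)) with hm | hm <;>
    rcases hside (x + 1) ((hnbr _).2 (.inr rfl)) with hp | hp
  · exact absurd ⟨hp, hm⟩ hnotL
  · refine ⟨x + 1, ⟨hp, .inr rfl⟩, fun r ⟨hr, h⟩ => h.resolve_left ?_⟩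
    rintro rfl
    exact hdisj.notMem_of_mem_left hm hr
  · refine ⟨x - 1, ⟨hm, .inl rfl⟩, fun r ⟨hr, h⟩ => h.resolve_right ?_⟩
    rintro rfl
    exact hdisj.notMem_of_mem_left hp hr
  · exact absurd ⟨hp, hm⟩ hnotR

end CycleArcs

section Doors

variable {V : Type} [DecidableEq V]

def IsDoor (black : Set V) (d : Finset V) : Prop := ∃ u ∈ black, ∃ v ∉ black, d = {u, v}

variable {black : Set V}

lemma IsDoor.card_eq_two {d : Finset V} (hd : IsDoor black d) : d.card = 2 := by
  obtain ⟨u, hu, v, hv, rfl⟩ := hd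
  exact card_pair (by rintro rfl; exact hv hu)

lemma existsUnique_isDoor_ne {t d : Finset V} (ht : t.card = 3) (hdt : d ⊆ t)
    (hd : IsDoor black d) : ∃! d', d' ⊆ t ∧ d' ≠ d ∧ IsDoor black d' := by
  obtain ⟨u, hu, v, hv, rfl⟩ := hd
  obtain ⟨c, hc⟩ : ∃ c, t \ {u, v} = {c} := card_eq_one.1 (by
    rw [card_sdiff_of_subset hdt, ht, card_pair (by rintro rfl; exact hv hu)])
  have hcuv : c ∉ ({u, v} : Finset V) := (mem_sdiff.1 (hc ▸ mem_singleton_self c)).2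
  have ht : t = {c, u, v} := by
    rw [← sdiff_union_of_subset hdt, hc]; rfl
  subst ht
  simp only [mem_insert, mem_singleton, not_or] at hcuv
  have hmem : ∀ {p q : V}, {p, q} ⊆ ({c, u, v} : Finset V) →
      (p = c ∨ p = u ∨ p = v) ∧ (q = c ∨ q = u ∨ q = v) := fun h =>
    ⟨by simpa using h (mem_insert_self _ _),
      by simpa using h (mem_insert_of_mem (mem_singleton_self _))⟩
  -- The other door of `t` joins `c` to the endpoint of `d` of the opposite colour.
  by_cases hcb : c ∈ black
  · refine ⟨{c, v}, ⟨?_, ?_, c, hcb, v, hv, rfl⟩, ?_⟩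
    · intro z; simp only [mem_insert, mem_singleton]; tauto
    · intro h; have : c ∈ ({u, v} : Finset V) := h ▸ by simp
      simp_all
    · rintro _ ⟨hsub, hne, p, hp, q, hq, rfl⟩
      obtain ⟨hp', hq'⟩ := hmem hsub
      rcases hp' with rfl | rfl | rfl <;> rcases hq' with rfl | rfl | rfl <;> simp_all [pair_comm]
  · refine ⟨{u, c}, ⟨?_, ?_, u, hu, c, hcb, rfl⟩, ?_⟩
    · intro z; simp only [mem_insert, mem_singleton]; tauto
    · intro h; have : c ∈ ({u, v} : Finset V) := h ▸ by simp
      simp_all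
    · rintro _ ⟨hsub, hne, p, hp, q, hq, rfl⟩
      obtain ⟨hp', hq'⟩ := hmem hsub
      rcases hp' with rfl | rfl | rfl <;> rcases hq' with rfl | rfl | rfl <;> simp_all [pair_comm]

lemma Finset.union_eq_of_card_two_of_card_three {t d d' : Finset V} (ht : t.card = 3)
    (hd : d.card = 2) (hd' : d'.card = 2) (hdt : d ⊆ t) (hd't : d' ⊆ t) (hne : d ≠ d') :
    d ∪ d' = t := by
  refine eq_of_subset_of_card_le (union_subset hdt hd't) ?_
  have hlt : d ⊂ d ∪ d' := ssubset_iff_subset_ne.2 ⟨subset_union_left, fun h =>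
    hne (eq_of_subset_of_card_le (h ▸ subset_union_right) (by omega)).symm⟩
  have := card_lt_card hlt
  omega

end Doors

namespace AbstractTriangulation

variable {V : Type} [DecidableEq V] [Fintype V] (K : AbstractTriangulation V)

lemma boundary_adj_iff {u v : V} :
    K.boundary.Adj u v ↔ u ≠ v ∧ #{t ∈ K.tris | {u, v} ⊆ t} = 1 := by
  simp only [boundary, insert_subset_iff, singleton_subset_iff]

lemma skeleton_adj_of_mem {t : Finset V} (ht : t ∈ K.tris) {u v : V} (hu : u ∈ t) (hv : v ∈ t)
    (huv : u ≠ v) : K.skeleton.Adj u v :=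
  ⟨huv, t, ht, hu, hv⟩

lemma induce_reachable_of_mem {s : Set V} {t : Finset V} (ht : t ∈ K.tris) {u v : V}
    (hu : u ∈ t) (hv : v ∈ t) (hus : u ∈ s) (hvs : v ∈ s) :
    (K.skeleton.induce s).Reachable ⟨u, hus⟩ ⟨v, hvs⟩ := by
  obtain rfl | huv := eq_or_ne u v
  · rfl
  · exact (induce_adj.2 (K.skeleton_adj_of_mem ht hu hv huv)).reachable

def doorGraph (black : Set V) : SimpleGraph (Finset V) where
  Adj d d' := d ≠ d' ∧ IsDoor black d ∧ IsDoor black d' ∧ ∃ t ∈ K.tris, d ⊆ t ∧ d' ⊆ t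
  symm := ⟨fun _ _ ⟨hne, hd, hd', t, ht, hdt, hd't⟩ => ⟨hne.symm, hd', hd, t, ht, hd't, hdt⟩⟩
  loopless := ⟨fun _ h => h.1 rfl⟩

variable {K} {black : Set V}

open Classical in
lemma doorGraph_degree {d : Finset V} (hd : IsDoor black d) :
    (K.doorGraph black).degree d = #{t ∈ K.tris | d ⊆ t} := by
  have hunion {d' t} (ht : t ∈ K.tris) (hdt : d ⊆ t) (hd't : d' ⊆ t) (hd' : IsDoor black d')
      (hne : d ≠ d') : d ∪ d' = t :=
    union_eq_of_card_two_of_card_three (K.card_three t ht) hd.card_eq_two hd'.card_eq_two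
      hdt hd't hne
  rw [← card_neighborFinset_eq_degree]
  refine card_bij (fun d' _ => d ∪ d') ?_ ?_ ?_ <;> simp only [mem_neighborFinset]
  · rintro d' ⟨hne, -, hd', t, ht, hdt, hd't⟩
    rw [hunion ht hdt hd't hd' hne]
    exact mem_filter.2 ⟨ht, hdt⟩
  · rintro d₁ ⟨hne₁, -, hd₁, t₁, ht₁, hdt₁, hd₁t₁⟩ d₂ ⟨hne₂, -, hd₂, t₂, ht₂, hdt₂, hd₂t₂⟩ heq
    have hd₂t₁ : d₂ ⊆ t₁ := by
      rw [← hunion ht₁ hdt₁ hd₁t₁ hd₁ hne₁, heq]; exact subset_union_right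
    exact (existsUnique_isDoor_ne (K.card_three t₁ ht₁) hdt₁ hd).unique
      ⟨hd₁t₁, Ne.symm hne₁, hd₁⟩ ⟨hd₂t₁, Ne.symm hne₂, hd₂⟩
  · intro t ht
    obtain ⟨ht, hdt⟩ := mem_filter.1 ht
    obtain ⟨d', ⟨hd't, hne, hd'⟩, -⟩ := existsUnique_isDoor_ne (K.card_three t ht) hdt hd
    exact ⟨d', ⟨Ne.symm hne, hd, hd', t, ht, hdt, hd't⟩, hunion ht hdt hd't hd' (Ne.symm hne)⟩

open Classical in
lemma exists_boundary_adj_of_odd_degree {d : Finset V} (h : Odd ((K.doorGraph black).degree d)) :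
    ∃ u ∈ black, ∃ v ∉ black, d = {u, v} ∧ K.boundary.Adj u v := by
  obtain ⟨d', hne, hd, -, t, ht, hdt, -⟩ :=
    ((K.doorGraph black).degree_pos_iff_exists_adj d).1 h.pos
  obtain ⟨u, hu, v, hv, rfl⟩ := hd
  refine ⟨u, hu, v, hv, rfl, (K.boundary_adj_iff).2 ⟨by rintro rfl; exact hv hu, ?_⟩⟩
  rw [doorGraph_degree ⟨u, hu, v, hv, rfl⟩] at h
  rcases K.edge_mem _ (card_pair (by rintro rfl; exact hv hu)) ⟨t, ht, hdt⟩ with h1 | h2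
  · exact h1
  · rw [h2] at h; exact absurd h (by decide)

variable {good : Set V}

lemma exists_mem_of_isDoor
    (hgood : ∀ u ∈ black, ∀ v ∉ black, K.skeleton.Adj u v → u ∈ good ∨ v ∈ good)
    {d t : Finset V} (ht : t ∈ K.tris) (hdt : d ⊆ t) (hd : IsDoor black d) : ∃ z ∈ d, z ∈ good := by
  obtain ⟨u, hu, v, hv, rfl⟩ := hd
  have huv : K.skeleton.Adj u v :=
    K.skeleton_adj_of_mem ht (hdt (by simp)) (hdt (by simp)) (by rintro rfl; exact hv hu)
  rcases hgood u hu v hv huv with h | h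
  · exact ⟨u, by simp, h⟩
  · exact ⟨v, by simp, h⟩

lemma induce_reachable_of_doorGraph_reachable
    (hgood : ∀ u ∈ black, ∀ v ∉ black, K.skeleton.Adj u v → u ∈ good ∨ v ∈ good)
    {d d' t : Finset V} (h : (K.doorGraph black).Reachable d d') (ht : t ∈ K.tris) (hdt : d ⊆ t)
    {z z' : V} (hz : z ∈ d) (hz' : z' ∈ d') (hzg : z ∈ good) (hz'g : z' ∈ good) :
    (K.skeleton.induce good).Reachable ⟨z, hzg⟩ ⟨z', hz'g⟩ := by
  obtain ⟨p⟩ := h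
  induction p generalizing z t with
  | nil => exact K.induce_reachable_of_mem ht (hdt hz) (hdt hz') hzg hz'g
  | cons hadj _ ih =>
    obtain ⟨-, -, hm, t', ht', hdt', hmt'⟩ := hadj
    obtain ⟨w, hw, hwg⟩ := exists_mem_of_isDoor hgood ht' hmt' hm
    exact (K.induce_reachable_of_mem ht' (hdt' hz) (hmt' hw) hzg hwg).trans
      (ih ht' hmt' hw hz' hwg)

open Classical in
theorem exists_boundary_adj_induce_reachable
    (hgood : ∀ u ∈ black, ∀ v ∉ black, K.skeleton.Adj u v → u ∈ good ∨ v ∈ good)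
    {a a' : V} (ha : a ∈ black) (ha' : a' ∉ black) (haa' : K.boundary.Adj a a') (hag : a ∈ good) :
    ∃ u ∈ black, ∃ v ∉ black, K.boundary.Adj u v ∧ (u ≠ a ∨ v ≠ a') ∧
      ∀ z ∈ ({u, v} : Finset V), ∀ hz : z ∈ good,
        (K.skeleton.induce good).Reachable ⟨a, hag⟩ ⟨z, hz⟩ := by
  have hone := ((K.boundary_adj_iff).1 haa').2
  have hodd : Odd ((K.doorGraph black).degree {a, a'}) := by
    rw [doorGraph_degree ⟨a, ha, a', ha', rfl⟩, hone]
    exact odd_one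
  obtain ⟨b, hb, hreach, hbodd⟩ := exists_ne_odd_degree_reachable hodd
  obtain ⟨u, hu, v, hv, rfl, huv⟩ := exists_boundary_adj_of_odd_degree hbodd
  obtain ⟨t, ht⟩ := card_pos.1 (hone ▸ one_pos)
  obtain ⟨ht, hat⟩ := mem_filter.1 ht
  refine ⟨u, hu, v, hv, huv, ?_, fun z hz hzg =>
    induce_reachable_of_doorGraph_reachable hgood hreach ht hat (by simp) hz hag hzg⟩
  by_contra! h
  exact hb (by rw [h.1, h.2])

end AbstractTriangulation

lemma apply_mem_closureAvoiding_iff {V : Type} [DecidableEq V] [Fintype V] {n : ℕ}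
    {K : AbstractTriangulation V} {f : Fin n → V} {x y : Fin n} {L R : Set (Fin n)} {S : Set V}
    (hinj : Function.Injective f) (hcover : ∀ u : Fin n, u ≠ x → u ≠ y → u ∈ L ∨ u ∈ R)
    (hsep : ∀ (u v : V) (p : K.skeleton.Walk u v),
      u ∈ f '' L → v ∈ f '' R → f x ∉ p.support → f y ∉ p.support →
      ∃ s ∈ S, s ∈ p.support) (i : Fin n) :
    f i ∈ K.skeleton.closureAvoiding (insert (f x) (insert (f y) S)) (insert (f x) (f '' L)) ↔
      i = x ∨ i ∈ L := by
  refine ⟨?_, ?_⟩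
  · rintro ((h | h) | ⟨w, hw, hwg, hig, hwi⟩)
    · exact .inl (hinj h)
    · exact .inr (hinj.mem_set_image.1 h)
    · have hwL : w ∈ f '' L := hw.resolve_left (by rintro rfl; exact hwg (by simp))
      by_contra! hi
      have hiy : i ≠ y := by rintro rfl; exact hig (by simp)
      have hiR := (hcover i hi.1 hiy).resolve_left hi.2
      obtain ⟨p, -, hp⟩ := exists_isPath_of_induce_reachable hwi
      obtain ⟨s, hs, hsp⟩ := hsep w (f i) p hwL ⟨i, hiR, rfl⟩ (fun h => hp _ h (by simp))
        (fun h => hp _ h (by simp))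
      exact hp s hsp (by simp [hs])
  · rintro (rfl | h)
    · exact .inl (Set.mem_insert _ _)
    · exact .inl (Set.mem_insert_of_mem _ ⟨i, h, rfl⟩)

theorem sperner_separator_general {V : Type} [DecidableEq V] [Fintype V]
    (n : ℕ) (hn : 4 ≤ n) (K : AbstractTriangulation V) (f : Fin n → V)
    (hbd : K.BoundaryIsCycle n f)
    (x y : Fin n) (hnadj : ¬ (SimpleGraph.cycleGraph n).Adj x y)
    (L R : Set (Fin n))
    (hLne : L.Nonempty) (hRne : R.Nonempty) (hdisj : Disjoint L R)
    (hxL : x ∉ L) (hyL : y ∉ L) (hxR : x ∉ R) (hyR : y ∉ R)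
    (hcover : ∀ u : Fin n, u ≠ x → u ≠ y → u ∈ L ∨ u ∈ R)
    (hLR : ∀ u ∈ L, ∀ v ∈ R, ¬ (deletedCycle n x y).Reachable u v)
    (S : Set V)
    (hsep : ∀ (u v : V) (p : K.skeleton.Walk u v),
      u ∈ f '' L → v ∈ f '' R → f x ∉ p.support → f y ∉ p.support →
      ∃ s ∈ S, s ∈ p.support) :
    ∃ p : K.skeleton.Walk (f x) (f y), p.IsPath ∧
      ∀ v ∈ p.support, v ≠ f x → v ≠ f y → v ∈ S := by
  obtain ⟨m, rfl⟩ : ∃ m, n = m + 2 := ⟨n - 2, by omega⟩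
  obtain ⟨hinj, hadj, hbdf⟩ := hbd
  obtain ⟨r, ⟨hrR, hxr⟩, hr⟩ :=
    existsUnique_adj_mem_of_separated x y hnadj hLne hRne hdisj hxL hyL hxR hyR hcover hLR
  set good := insert (f x) (insert (f y) S)
  set black := K.skeleton.closureAvoiding good (insert (f x) (f '' L))
  have hcol : ∀ i, f i ∈ black ↔ i = x ∨ i ∈ L := apply_mem_closureAvoiding_iff hinj hcover hsep
  have hfr : f r ∉ black := by
    rw [hcol]
    rintro (rfl | hrL)
    · exact hxr.ne rfl
    · exact hdisj.notMem_of_mem_left hrL hrR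
  obtain ⟨u, hu, v, hv, huv, hne, hreach⟩ := K.exists_boundary_adj_induce_reachable
    (fun u hu v hv => mem_or_mem_of_adj_of_mem_closureAvoiding hu hv)
    ((hcol x).2 (.inl rfl)) hfr ((hadj x r).2 hxr) (Set.mem_insert _ _)
  obtain ⟨⟨i, rfl⟩, ⟨j, rfl⟩⟩ := hbdf _ _ huv
  rw [hcol] at hu hv
  push Not at hv
  obtain rfl : j = y := by
    by_contra hjy
    have hjR := (hcover j hv.1 hjy).resolve_left hv.2
    rcases hu with rfl | hiL
    · obtain rfl := hr j ⟨hjR, (hadj _ _).1 huv⟩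
      simp at hne
    · exact hLR i hiL j hjR <| Adj.reachable ⟨(hadj i j).1 huv, ne_of_mem_of_not_mem hiL hxL,
        ne_of_mem_of_not_mem hiL hyL, ne_of_mem_of_not_mem hjR hxR, ne_of_mem_of_not_mem hjR hyR⟩
  obtain ⟨p, hp, hpg⟩ := exists_isPath_of_induce_reachable (hreach (f j) (by simp) (by simp [good]))
  exact ⟨p, hp, fun z hz hzx hzy => by simpa [good, hzx, hzy] using hpg z hz⟩

/-- Sperner-type lemma. If `∂K = C_n`, `x,y` are nonadjacent
vertices of `C_n`, `L,R` are the two connected components of `C_n - x - y`, and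
`S ⊆ V(K) \ {x,y}` separates `L` from `R` in `K - x - y`, then `S` contains all
internal vertices of some path from `x` to `y` in the 1-skeleton of `K`. -/
theorem sperner_separator {V : Type} [DecidableEq V] [Fintype V]
    (n : ℕ) (hn : 4 ≤ n) (K : AbstractTriangulation V) (f : Fin n → V)
    (hbd : K.BoundaryIsCycle n f)
    (x y : Fin n) (hxy : x ≠ y) (hnadj : ¬ (SimpleGraph.cycleGraph n).Adj x y)
    (L R : Set (Fin n))
    (hLne : L.Nonempty) (hRne : R.Nonempty) (hdisj : Disjoint L R)
    (hxL : x ∉ L) (hyL : y ∉ L) (hxR : x ∉ R) (hyR : y ∉ R)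
    (hcover : ∀ u : Fin n, u ≠ x → u ≠ y → u ∈ L ∨ u ∈ R)
    (hLconn : ∀ u ∈ L, ∀ v ∈ L, (deletedCycle n x y).Reachable u v)
    (hRconn : ∀ u ∈ R, ∀ v ∈ R, (deletedCycle n x y).Reachable u v)
    (hLR : ∀ u ∈ L, ∀ v ∈ R, ¬ (deletedCycle n x y).Reachable u v)
    (S : Set V) (hSK : S ⊆ ↑K.verts) (hSx : f x ∉ S) (hSy : f y ∉ S)
    (hsep : ∀ (u v : V) (p : K.skeleton.Walk u v),
      u ∈ f '' L → v ∈ f '' R → f x ∉ p.support → f y ∉ p.support →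
      ∃ s ∈ S, s ∈ p.support) :
    ∃ p : K.skeleton.Walk (f x) (f y), p.IsPath ∧
      ∀ v ∈ p.support, v ≠ f x → v ≠ f y → v ∈ S :=
  sperner_separator_general n hn K f hbd x y hnadj L R hLne hRne hdisj hxL hyL hxR hyR hcover hLR S
    hsep
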